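/- arXiv:1206.2558 — 3 statements merged into one kernel-verified Lean document; each statement's English description precedes it below -/
import Mathlib

section
/- Fix an integer n ≥ 1 and let τ be the tau function of Σ(2,7,14n+3). Define M_i := 14i+1 for 0 ≤ i ≤ 2n; M_i := 14(n + i/2) + 1 for even i with 2n+1 ≤ i ≤ 4n and M_i := 14(n + (i-1)/2) + 7 for odd i with 2n+1 ≤ i ≤ 4n; and M_i := 14(i-n) + 1 for 4n+1 ≤ i ≤ 6n. Define m_i := 14i for 0 ≤ i ≤ 2n; m_i := 14(n + i/2) for even i with 2n+1 ≤ i ≤ 4n+1 and m_i := 14(n + (i-1)/2) + 6 for odd i with 2n+1 ≤ i ≤ 4n+1; and m_i := 14(i-n) - 8 for 4n+2 ≤ i ≤ 6n+1. Then: (a) τ(j+1) ≥ τ(j) whenever m_i ≤ j < M_i with 0 ≤ i ≤ 6n, τ(j+1) ≤ τ(j) whenever M_i ≤ j < m_{i+1} with 0 ≤ i ≤ 6n, and τ(j+1) ≥ τ(j) for all j ≥ m_{6n+1}; (b) τ(M_i) = 1-2i for 0 ≤ i ≤ n, τ(M_i) = 1-n-i for n+1 ≤ i ≤ 2n-1,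 τ(M_i) = 1-3n for 2n ≤ i ≤ 4n, τ(M_i) = 1-7n+i for 4n+1 ≤ i ≤ 5n, and τ(M_i) = 1-12n+2i for 5n+1 ≤ i ≤ 6n; (c) τ(m_i) = -2i for 0 ≤ i ≤ n, τ(m_i) = -n-i for n+1 ≤ i ≤ 2n-1, τ(m_i) = -3n for 2n ≤ i ≤ 4n+1, τ(m_i) = -1-7n+i for 4n+2 ≤ i ≤ 5n, and τ(m_i) = -2-12n+2i for 5n+1 ≤ i ≤ 6n+1. -/
/-- `Δ_j = 1 + j - ⌈j/2⌉ - ⌈j/7⌉ - ⌈j(5n+1)/(14n+3)⌉` for the Seifert data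
`(-1, (2,1), (7,1), (14n+3, 5n+1))` of `Σ(2,7,14n+3)`. -/
noncomputable def delta27p3 (n j : ℤ) : ℤ :=
  1 + j - ⌈(j : ℚ) / 2⌉ - ⌈(j : ℚ) / 7⌉ - ⌈(j * (5 * n + 1) : ℚ) / (14 * n + 3 : ℚ)⌉

/-- The tau function `τ(k) = Σ_{j=0}^{k-1} Δ_j` of `Σ(2,7,14n+3)`. -/
noncomputable def tau27p3 (n k : ℤ) : ℤ := ∑ j ∈ Finset.range k.toNat, delta27p3 n (j : ℤ)

/-- `M_i = 14i+1` for `i ≤ 2n`; `M_i = 14(n + i/2) + 1` (`i` even) or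
`14(n + (i-1)/2) + 7` (`i` odd) for `2n+1 ≤ i ≤ 4n`; `M_i = 14(i-n) + 1` for `4n+1 ≤ i`. -/
def M27p3 (n i : ℤ) : ℤ :=
  if i ≤ 2 * n then 14 * i + 1
  else if i ≤ 4 * n then
    (if i % 2 = 0 then 14 * (n + i / 2) + 1 else 14 * (n + (i - 1) / 2) + 7)
  else 14 * (i - n) + 1

/-- `m_i = 14i` for `i ≤ 2n`; `m_i = 14(n + i/2)` (`i` even) or
`14(n + (i-1)/2) + 6` (`i` odd) for `2n+1 ≤ i ≤ 4n+1`; `m_i = 14(i-n) - 8` for `4n+2 ≤ i`. -/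
def m27p3 (n i : ℤ) : ℤ :=
  if i ≤ 2 * n then 14 * i
  else if i ≤ 4 * n + 1 then
    (if i % 2 = 0 then 14 * (n + i / 2) else 14 * (n + (i - 1) / 2) + 6)
  else 14 * (i - n) - 8

/-!
Writing `j = 14a + b` with `0 ≤ b < 14`, the parts of the three ceilings that are linear in `a`
cancel (`14a = 7a + 2a + 5a`), so
`Δ_{14a+b} = 1 + b - ⌈b/2⌉ - ⌈b/7⌉ - ⌈(b(5n+1) - a)/(14n+3)⌉`.
This is nondecreasing in `a`, and for `0 ≤ a ≤ 5n+1` it is an explicit table with a single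
nonzero entry besides `b = 0, 1` at each of `b = 3, 6, 9, 12`, which switches off or on when `a`
crosses `n, 2n, 3n, 4n` respectively. Summing over blocks, `τ(14a)` is the maximum of five affine
functions of `a`; the values at `M_i`, `m_i` and the signs of `Δ` in between are read off the
table.
-/

lemma Rat.ceil_intCast_div_intCast_of_nonneg {m d : ℤ} (hd : 0 ≤ d) :
    ⌈(m : ℚ) / d⌉ = -((-m) / d) := by
  lift d to ℕ using hd
  exact_mod_cast Rat.ceil_intCast_div_natCast m d

-- `Int` division rounds down for a positive divisor, so `(-x) / d = -⌈x / d⌉`.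
lemma delta27p3_eq_ediv (n j : ℤ) (hn : 0 ≤ n) :
    delta27p3 n j = 1 + j + (-j) / 2 + (-j) / 7 + (-(j * (5 * n + 1))) / (14 * n + 3) := by
  have h₂ := Rat.ceil_intCast_div_intCast_of_nonneg (m := j) (d := 2) (by norm_num)
  have h₇ := Rat.ceil_intCast_div_intCast_of_nonneg (m := j) (d := 7) (by norm_num)
  have h := Rat.ceil_intCast_div_intCast_of_nonneg (m := j * (5 * n + 1)) (d := 14 * n + 3)
    (by omega)
  push_cast at h₂ h₇ h
  rw [delta27p3, h₂, h₇, h]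
  ring

lemma delta27p3_fourteen_mul_add (n a b : ℤ) (hn : 0 ≤ n) :
    delta27p3 n (14 * a + b) =
      1 + b + (-b) / 2 + (-b) / 7 + (a - b * (5 * n + 1)) / (14 * n + 3) := by
  have h : -((14 * a + b) * (5 * n + 1)) = (a - b * (5 * n + 1)) + (-5 * a) * (14 * n + 3) := by
    ring
  rw [delta27p3_eq_ediv n _ hn, h, Int.add_mul_ediv_right _ _ (by omega)]
  omega

def delta27p3Block (n a b : ℤ) : ℤ :=
  if b = 0 then 1
  else if b = 1 then (if a ≤ 5 * n then -1 else 0)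
  else if b = 3 then (if a < n then -1 else 0)
  else if b = 6 then (if a < 2 * n then 0 else 1)
  else if b = 9 then (if a < 3 * n then -1 else 0)
  else if b = 12 then (if a < 4 * n then 0 else 1)
  else 0

lemma delta27p3_fourteen_mul_add_eq_block (n a b : ℤ) (hn : 1 ≤ n) (ha₀ : 0 ≤ a)
    (ha : a ≤ 5 * n + 1) (hb₀ : 0 ≤ b) (hb : b < 14) :
    delta27p3 n (14 * a + b) = delta27p3Block n a b := by
  rw [delta27p3_fourteen_mul_add n a b (by omega)]
  have hd : 0 < 14 * n + 3 := by omega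
  have hlo := Int.ediv_mul_le (a - b * (5 * n + 1)) hd.ne'
  have hhi := Int.lt_ediv_add_one_mul_self (a - b * (5 * n + 1)) hd
  generalize (a - b * (5 * n + 1)) / (14 * n + 3) = q at hlo hhi ⊢
  have hq₀ : q ≤ 0 := by nlinarith
  have hq₅ : -5 ≤ q := by nlinarith
  unfold delta27p3Block
  interval_cases q <;> interval_cases b <;> simp <;> omega

lemma delta27p3_fourteen_mul_add_monotone (n b : ℤ) (hn : 0 ≤ n) :
    Monotone fun a => delta27p3 n (14 * a + b) := by
  intro a a' h
  have := Int.ediv_le_ediv (c := 14 * n + 3) (by omega)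
    (by omega : a - b * (5 * n + 1) ≤ a' - b * (5 * n + 1))
  simp only [delta27p3_fourteen_mul_add n _ b hn]
  omega

lemma tau27p3_add (n k : ℤ) (l : ℕ) (hk : 0 ≤ k) :
    tau27p3 n (k + l) = tau27p3 n k + ∑ c ∈ Finset.range l, delta27p3 n (k + c) := by
  rw [tau27p3, tau27p3, show (k + l).toNat = k.toNat + l by omega, Finset.sum_range_add]
  push_cast
  rw [Int.toNat_of_nonneg hk]

lemma tau27p3_succ (n k : ℤ) (hk : 0 ≤ k) :
    tau27p3 n (k + 1) = tau27p3 n k + delta27p3 n k := by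
  simpa using tau27p3_add n k 1 hk

lemma tau27p3_fourteen_mul_add (n a : ℤ) (b : ℕ) (hn : 1 ≤ n) (ha₀ : 0 ≤ a)
    (ha : a ≤ 5 * n + 1) (hb : b ≤ 14) :
    tau27p3 n (14 * a + b) =
      tau27p3 n (14 * a) + ∑ c ∈ Finset.range b, delta27p3Block n a c := by
  rw [tau27p3_add n _ b (by omega)]
  congr 1
  refine Finset.sum_congr rfl fun c hc => ?_
  have := Finset.mem_range.1 hc
  exact delta27p3_fourteen_mul_add_eq_block n a c hn ha₀ ha (by omega) (by omega)

lemma tau27p3_fourteen_mul (n a : ℤ) (hn : 1 ≤ n) (ha₀ : 0 ≤ a) (ha : a ≤ 5 * n + 1) :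
    tau27p3 n (14 * a) =
      max (max (-2 * a) (-n - a)) (max (-3 * n) (max (a - 6 * n) (2 * a - 10 * n))) := by
  lift a to ℕ using ha₀
  induction a with
  | zero => rw [Nat.cast_zero, mul_zero, tau27p3, Int.toNat_zero, Finset.sum_range_zero]; omega
  | succ a ih =>
    have h := tau27p3_fourteen_mul_add n a 14 hn (by omega) (by omega) le_rfl
    simp only [Finset.sum_range_succ, Finset.sum_range_zero, delta27p3Block] at h
    push_cast at h ⊢
    rw [mul_add, mul_one, h, ih (by omega)]
    split_ifs <;> omega

lemma tau27p3_fourteen_mul_add_one (n a : ℤ) (hn : 1 ≤ n) (ha₀ : 0 ≤ a) (ha : a ≤ 5 * n) :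
    tau27p3 n (14 * a + 1) = tau27p3 n (14 * a) + 1 := by
  simpa [delta27p3Block] using tau27p3_fourteen_mul_add n a 1 hn ha₀ (by omega) (by norm_num)

lemma tau27p3_fourteen_mul_add_six (n a : ℤ) (hn : 1 ≤ n) (ha₀ : 0 ≤ a) (ha : a ≤ 5 * n) :
    tau27p3 n (14 * a + 6) = tau27p3 n (14 * a) - if a < n then 1 else 0 := by
  have h := tau27p3_fourteen_mul_add n a 6 hn ha₀ (by omega) (by norm_num)
  simp only [Finset.sum_range_succ, Finset.sum_range_zero, delta27p3Block] at h
  push_cast at h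
  split_ifs at h ⊢ <;> omega

lemma tau27p3_fourteen_mul_add_seven (n a : ℤ) (hn : 1 ≤ n) (ha₀ : 0 ≤ a)
    (ha : a ≤ 5 * n) :
    tau27p3 n (14 * a + 7) =
      tau27p3 n (14 * a) - (if a < n then 1 else 0) + if 2 * n ≤ a then 1 else 0 := by
  have h := tau27p3_fourteen_mul_add n a 7 hn ha₀ (by omega) (by norm_num)
  simp only [Finset.sum_range_succ, Finset.sum_range_zero, delta27p3Block] at h
  push_cast at h
  split_ifs at h ⊢ <;> omega

lemma tau27p3_M27p3 (n i : ℤ) (hn : 1 ≤ n) (hi₀ : 0 ≤ i) (hi : i ≤ 6 * n) :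
    tau27p3 n (M27p3 n i) =
      1 + max (max (-2 * i) (-n - i)) (max (-3 * n) (max (i - 7 * n) (2 * i - 12 * n))) := by
  unfold M27p3
  split_ifs
  · rw [tau27p3_fourteen_mul_add_one n i hn hi₀ (by omega),
      tau27p3_fourteen_mul n i hn hi₀ (by omega)]
    omega
  · rw [tau27p3_fourteen_mul_add_one n _ hn (by omega) (by omega),
      tau27p3_fourteen_mul n _ hn (by omega) (by omega)]
    omega
  · rw [tau27p3_fourteen_mul_add_seven n _ hn (by omega) (by omega),
      tau27p3_fourteen_mul n _ hn (by omega) (by omega)]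
    split_ifs <;> omega
  · rw [tau27p3_fourteen_mul_add_one n _ hn (by omega) (by omega),
      tau27p3_fourteen_mul n _ hn (by omega) (by omega)]
    omega

lemma tau27p3_m27p3 (n i : ℤ) (hn : 1 ≤ n) (hi₀ : 0 ≤ i) (hi : i ≤ 6 * n + 1) :
    tau27p3 n (m27p3 n i) =
      max (max (-2 * i) (-n - i)) (max (-3 * n) (max (i - 7 * n - 1) (2 * i - 12 * n - 2))) := by
  unfold m27p3
  split_ifs
  · rw [tau27p3_fourteen_mul n i hn hi₀ (by omega)]
    omega
  · rw [tau27p3_fourteen_mul n _ hn (by omega) (by omega)]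
    omega
  · rw [tau27p3_fourteen_mul_add_six n _ hn (by omega) (by omega),
      tau27p3_fourteen_mul n _ hn (by omega) (by omega)]
    split_ifs <;> omega
  · rw [show 14 * (i - n) - 8 = 14 * (i - n - 1) + 6 by ring,
      tau27p3_fourteen_mul_add_six n _ hn (by omega) (by omega),
      tau27p3_fourteen_mul n _ hn (by omega) (by omega)]
    split_ifs <;> omega

lemma delta27p3_eq_block_of_lt (n j : ℤ) (hn : 1 ≤ n) (hj₀ : 0 ≤ j)
    (hj : j < 14 * (5 * n + 2)) :
    delta27p3 n j = delta27p3Block n (j / 14) (j % 14) := by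
  rw [← delta27p3_fourteen_mul_add_eq_block n _ _ hn (by omega) (by omega) (by omega) (by omega),
    Int.mul_ediv_add_emod]

lemma tau27p3_le_succ_of_m27p3_le_of_lt_M27p3 (n i j : ℤ) (hn : 1 ≤ n) (hi₀ : 0 ≤ i)
    (hi : i ≤ 6 * n) (hj₀ : m27p3 n i ≤ j) (hj : j < M27p3 n i) :
    tau27p3 n j ≤ tau27p3 n (j + 1) := by
  unfold m27p3 at hj₀
  unfold M27p3 at hj
  have hj_range : 0 ≤ j ∧ j < 14 * (5 * n + 2) := by split_ifs at hj₀ hj <;> omega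
  rw [tau27p3_succ n j hj_range.1, delta27p3_eq_block_of_lt n j hn hj_range.1 hj_range.2]
  unfold delta27p3Block
  split_ifs at hj₀ hj ⊢ <;> omega

lemma tau27p3_succ_le_of_M27p3_le_of_lt_m27p3 (n i j : ℤ) (hn : 1 ≤ n) (hi₀ : 0 ≤ i)
    (hi : i ≤ 6 * n) (hj₀ : M27p3 n i ≤ j) (hj : j < m27p3 n (i + 1)) :
    tau27p3 n (j + 1) ≤ tau27p3 n j := by
  unfold M27p3 at hj₀
  unfold m27p3 at hj
  have hj_range : 0 ≤ j ∧ j < 14 * (5 * n + 2) := by split_ifs at hj₀ hj <;> omega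
  rw [tau27p3_succ n j hj_range.1, delta27p3_eq_block_of_lt n j hn hj_range.1 hj_range.2]
  unfold delta27p3Block
  split_ifs at hj₀ hj ⊢ <;> omega

lemma tau27p3_le_succ_of_m27p3_le (n j : ℤ) (hn : 1 ≤ n) (hj : m27p3 n (6 * n + 1) ≤ j) :
    tau27p3 n j ≤ tau27p3 n (j + 1) := by
  have hm : m27p3 n (6 * n + 1) = 14 * (5 * n) + 6 := by unfold m27p3; split_ifs <;> omega
  rw [hm] at hj
  rw [tau27p3_succ n j (by omega)]
  have hmono := delta27p3_fourteen_mul_add_monotone n (j % 14) (by omega)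
    (show min (j / 14) (5 * n + 1) ≤ j / 14 from min_le_left _ _)
  simp only [Int.mul_ediv_add_emod] at hmono
  rw [delta27p3_fourteen_mul_add_eq_block n _ _ hn (by omega) (by omega) (by omega) (by omega)]
    at hmono
  unfold delta27p3Block at hmono
  split_ifs at hmono <;> omega

/-- Structure of the tau function of `Σ(2,7,14n+3)` (`n ≥ 1`): monotonicity between the
local extrema `M_i`, `m_i`, and the values of `τ` at those extrema. -/
theorem tau_structure_27p3 (n : ℤ) (hn : 1 ≤ n) :
    (∀ i : ℤ, 0 ≤ i → i ≤ 6 * n → ∀ j : ℤ, m27p3 n i ≤ j → j < M27p3 n i →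
      tau27p3 n j ≤ tau27p3 n (j + 1)) ∧
    (∀ i : ℤ, 0 ≤ i → i ≤ 6 * n → ∀ j : ℤ, M27p3 n i ≤ j → j < m27p3 n (i + 1) →
      tau27p3 n (j + 1) ≤ tau27p3 n j) ∧
    (∀ j : ℤ, m27p3 n (6 * n + 1) ≤ j → tau27p3 n j ≤ tau27p3 n (j + 1)) ∧
    (∀ i : ℤ, 0 ≤ i → i ≤ n → tau27p3 n (M27p3 n i) = 1 - 2 * i) ∧
    (∀ i : ℤ, n + 1 ≤ i → i ≤ 2 * n - 1 → tau27p3 n (M27p3 n i) = 1 - n - i) ∧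
    (∀ i : ℤ, 2 * n ≤ i → i ≤ 4 * n → tau27p3 n (M27p3 n i) = 1 - 3 * n) ∧
    (∀ i : ℤ, 4 * n + 1 ≤ i → i ≤ 5 * n → tau27p3 n (M27p3 n i) = 1 - 7 * n + i) ∧
    (∀ i : ℤ, 5 * n + 1 ≤ i → i ≤ 6 * n → tau27p3 n (M27p3 n i) = 1 - 12 * n + 2 * i) ∧
    (∀ i : ℤ, 0 ≤ i → i ≤ n → tau27p3 n (m27p3 n i) = -2 * i) ∧
    (∀ i : ℤ, n + 1 ≤ i → i ≤ 2 * n - 1 → tau27p3 n (m27p3 n i) = -n - i) ∧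
    (∀ i : ℤ, 2 * n ≤ i → i ≤ 4 * n + 1 → tau27p3 n (m27p3 n i) = -3 * n) ∧
    (∀ i : ℤ, 4 * n + 2 ≤ i → i ≤ 5 * n → tau27p3 n (m27p3 n i) = -1 - 7 * n + i) ∧
    (∀ i : ℤ, 5 * n + 1 ≤ i → i ≤ 6 * n + 1 → tau27p3 n (m27p3 n i) = -2 - 12 * n + 2 * i) := by
  refine ⟨fun i hi₀ hi j => tau27p3_le_succ_of_m27p3_le_of_lt_M27p3 n i j hn hi₀ hi,
    fun i hi₀ hi j => tau27p3_succ_le_of_M27p3_le_of_lt_m27p3 n i j hn hi₀ hi,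
    fun j => tau27p3_le_succ_of_m27p3_le n j hn, ?_, ?_, ?_, ?_, ?_, ?_, ?_, ?_, ?_, ?_⟩
  all_goals
    intro i hi₀ hi
    first
    | rw [tau27p3_M27p3 n i hn (by omega) (by omega)]; omega
    | rw [tau27p3_m27p3 n i hn (by omega) (by omega)]; omega
end

section
/- Fix an integer n ≥ 1 and let τ be the tau function of Σ(2,7,14n-5). Define M_i := 14i+1 for 0 ≤ i ≤ 2n-1; M_i := 14(n + i/2) - 9 for even i with 2n ≤ i ≤ 4n-3 and M_i := 14(n + (i-1)/2) + 1 for odd i with 2n ≤ i ≤ 4n-3; and M_i := 14(i-n) + 15 for 4n-2 ≤ i ≤ 6n-4. Define m_i := 14i for 0 ≤ i ≤ 2n-1; m_i := 14(n + i/2) - 10 for even i with 2n ≤ i ≤ 4n-2 and m_i := 14(n + (i-1)/2) for odd i with 2n ≤ i ≤ 4n-2; and m_i := 14(i-n) + 4 for 4n-1 ≤ i ≤ 6n-3. Then: (a) τ(j+1) ≥ τ(j) whenever m_i ≤ j < M_i with 0 ≤ i ≤ 6n-4, τ(j+1) ≤ τ(j) whenever M_i ≤ j < m_{i+1} with 0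 ≤ i ≤ 6n-4, and τ(j+1) ≥ τ(j) for all j ≥ m_{6n-3}; (b) τ(M_i) = 1-2i for 0 ≤ i ≤ n-1, τ(M_i) = 2-n-i for n ≤ i ≤ 2n-1, τ(M_i) = 3-3n for 2n ≤ i ≤ 4n-4, τ(M_i) = 6-7n+i for 4n-3 ≤ i ≤ 5n-3, and τ(M_i) = 9-12n+2i for 5n-2 ≤ i ≤ 6n-4; (c) τ(m_i) = -2i for 0 ≤ i ≤ n-1, τ(m_i) = 1-n-i for n ≤ i ≤ 2n-1, τ(m_i) = 2-3n for 2n ≤ i ≤ 4n-3, τ(m_i) = 4-7n+i for 4n-2 ≤ i ≤ 5n-2, and τ(m_i) = 6-12n+2i for 5n-1 ≤ i ≤ 6n-3. -/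
/-!
Write `N = 14n - 5`. Since `14(11n - 4) = 11N - 1`, for `0 ≤ j < 14N` we have
`⌈j(11n - 4)/N⌉ = ⌊11j/14⌋ + [j < sN]` with `s = 11j mod 14`, so `Δ_j` is a 14-periodic sequence
(`0` at `j ≡ 3, 9, 13` and `1` elsewhere) minus the defect `[j < sN]`. Below `5N` the defect is `1`
at every residue with `s ≥ 5`; only the residues `j ≡ 9, 4, 13, 8` (`s = 1, 2, 3, 4`) lose it, as
`j` passes `N, 2N, 3N, 4N`. Summing over periods gives `τ(14q)` in closed form; every `M_i`, `m_i`
lies in `14q + {0, 1, 4, 5}`, and the sign of `Δ` between them is read off residue by residue.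
-/

/-- `Δ_j = 1 + 2j - ⌈j/2⌉ - ⌈5j/7⌉ - ⌈j(11n-4)/(14n-5)⌉` for the Seifert data
`(-2, (2,1), (7,5), (14n-5, 11n-4))` of `Σ(2,7,14n-5)`. -/
noncomputable def delta27m5 (n j : ℤ) : ℤ :=
  1 + 2 * j - ⌈(j : ℚ) / 2⌉ - ⌈(5 * j : ℚ) / 7⌉ - ⌈(j * (11 * n - 4) : ℚ) / (14 * n - 5 : ℚ)⌉

/-- The tau function `τ(k) = Σ_{j=0}^{k-1} Δ_j` of `Σ(2,7,14n-5)`. -/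
noncomputable def tau27m5 (n k : ℤ) : ℤ := ∑ j ∈ Finset.range k.toNat, delta27m5 n (j : ℤ)

/-- `M_i = 14i+1` for `i ≤ 2n-1`; `M_i = 14(n + i/2) - 9` (`i` even) or
`14(n + (i-1)/2) + 1` (`i` odd) for `2n ≤ i ≤ 4n-3`; `M_i = 14(i-n) + 15` for `4n-2 ≤ i`. -/
def M27m5 (n i : ℤ) : ℤ :=
  if i ≤ 2 * n - 1 then 14 * i + 1
  else if i ≤ 4 * n - 3 then
    (if i % 2 = 0 then 14 * (n + i / 2) - 9 else 14 * (n + (i - 1) / 2) + 1)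
  else 14 * (i - n) + 15

/-- `m_i = 14i` for `i ≤ 2n-1`; `m_i = 14(n + i/2) - 10` (`i` even) or
`14(n + (i-1)/2)` (`i` odd) for `2n ≤ i ≤ 4n-2`; `m_i = 14(i-n) + 4` for `4n-1 ≤ i`. -/
def m27m5 (n i : ℤ) : ℤ :=
  if i ≤ 2 * n - 1 then 14 * i
  else if i ≤ 4 * n - 2 then
    (if i % 2 = 0 then 14 * (n + i / 2) - 10 else 14 * (n + (i - 1) / 2))
  else 14 * (i - n) + 4

theorem ceil_mul_div_le_of_mul_eq {N c a p j : ℤ} (hN : 0 < N) (hc : 0 < c)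
    (h : c * p = a * N - 1) (hj : 0 ≤ j) :
    ⌈(j * p : ℚ) / N⌉ ≤ a * j / c + if j < a * j % c * N then 1 else 0 := by
  have hmul : c * (j * p) = (c * (a * j / c) + a * j % c) * N - j := by
    linear_combination j * h - N * Int.emod_add_mul_ediv (a * j) c
  have hsc := Int.emod_lt_of_pos (a * j) hc
  rw [Int.ceil_le, div_le_iff₀ (by exact_mod_cast hN)]
  suffices j * p ≤ (a * j / c + if j < a * j % c * N then 1 else 0) * N by exact_mod_cast this
  refine le_of_mul_le_mul_left ?_ hc
  split_ifs
  · nlinarith [mul_pos (sub_pos.2 hsc) hN]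
  · nlinarith

theorem ceil_mul_div_eq_of_mul_eq {N c a p j : ℤ} (hN : 0 < N) (hc : 0 < c)
    (h : c * p = a * N - 1) (hj0 : 0 ≤ j) (hj : j < c * N) :
    ⌈(j * p : ℚ) / N⌉ = a * j / c + if j < a * j % c * N then 1 else 0 := by
  refine le_antisymm (ceil_mul_div_le_of_mul_eq hN hc h hj0) ?_
  have hmul : c * (j * p) = (c * (a * j / c) + a * j % c) * N - j := by
    linear_combination j * h - N * Int.emod_add_mul_ediv (a * j) c
  have hs0 := Int.emod_nonneg (a * j) hc.ne'
  rw [Int.le_ceil_iff, lt_div_iff₀ (by exact_mod_cast hN)]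
  suffices ((a * j / c + if j < a * j % c * N then 1 else 0) - 1) * N < j * p by
    exact_mod_cast this
  refine lt_of_mul_lt_mul_left ?_ hc.le
  split_ifs
  · nlinarith
  · nlinarith [mul_nonneg hs0 hN.le]

def periodicDelta27m5 (j : ℤ) : ℤ := if j % 14 = 3 ∨ j % 14 = 9 ∨ j % 14 = 13 then 0 else 1

def deltaDefect27m5 (n j : ℤ) : ℤ := if j < 11 * j % 14 * (14 * n - 5) then 1 else 0

theorem periodicDelta27m5_eq (j : ℤ) :
    periodicDelta27m5 j = 1 + 2 * j + (-j) / 2 + (-(5 * j)) / 7 - 11 * j / 14 := by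
  obtain ⟨q, r, hr0, hr, rfl⟩ : ∃ q r, 0 ≤ r ∧ r < 14 ∧ j = 14 * q + r :=
    ⟨j / 14, j % 14, by omega, by omega, by omega⟩
  rw [periodicDelta27m5]
  interval_cases r <;> split_ifs <;> omega

theorem delta27m5_eq_periodicDelta27m5_add_sub_ceil (n j : ℤ) :
    delta27m5 n j = periodicDelta27m5 j + 11 * j / 14 -
      ⌈(j * (11 * n - 4 : ℤ) : ℚ) / (14 * n - 5 : ℤ)⌉ := by
  have h2 : ⌈(j : ℚ) / 2⌉ = -((-j) / 2) := by exact_mod_cast Rat.ceil_intCast_div_natCast j 2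
  have h7 : ⌈(5 * j : ℚ) / 7⌉ = -((-(5 * j)) / 7) := by
    exact_mod_cast Rat.ceil_intCast_div_natCast (5 * j) 7
  rw [delta27m5, h2, h7, periodicDelta27m5_eq]
  push_cast
  ring

theorem delta27m5_eq (n j : ℤ) (hn : 1 ≤ n) (hj0 : 0 ≤ j) (hj : j < 14 * (14 * n - 5)) :
    delta27m5 n j = periodicDelta27m5 j - deltaDefect27m5 n j := by
  rw [delta27m5_eq_periodicDelta27m5_add_sub_ceil, ceil_mul_div_eq_of_mul_eq (a := 11) (by omega)
    (by norm_num) (by ring) hj0 hj, deltaDefect27m5]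
  ring

theorem periodicDelta27m5_sub_le_delta27m5 (n j : ℤ) (hn : 1 ≤ n) (hj : 0 ≤ j) :
    periodicDelta27m5 j - deltaDefect27m5 n j ≤ delta27m5 n j := by
  have := ceil_mul_div_le_of_mul_eq (N := 14 * n - 5) (c := 14) (a := 11) (p := 11 * n - 4)
    (by omega) (by norm_num) (by ring) hj
  rw [delta27m5_eq_periodicDelta27m5_add_sub_ceil, deltaDefect27m5]
  linarith

theorem delta27m5_nonneg (n j : ℤ) (hn : 1 ≤ n) (hj : 0 ≤ j)
    (h3 : j % 14 = 3 → 5 * (14 * n - 5) ≤ j) (h9 : j % 14 = 9 → 14 * n - 5 ≤ j)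
    (h13 : j % 14 = 13 → 3 * (14 * n - 5) ≤ j) :
    0 ≤ delta27m5 n j := by
  have hle := periodicDelta27m5_sub_le_delta27m5 n j hn hj
  rw [periodicDelta27m5, deltaDefect27m5] at hle
  suffices j % 14 = 3 ∨ j % 14 = 9 ∨ j % 14 = 13 → 11 * j % 14 * (14 * n - 5) ≤ j by
    split_ifs at hle <;> omega
  rw [Int.mul_emod]
  have : 0 ≤ j % 14 := by omega
  have : j % 14 < 14 := by omega
  interval_cases j % 14 <;> simp only [Int.reduceMul, Int.reduceMod] <;> omega

theorem delta27m5_nonpos (n j : ℤ) (hn : 1 ≤ n) (hj0 : 0 ≤ j) (hj : j < 5 * (14 * n - 5))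
    (h0 : j % 14 ≠ 0) (h4 : j % 14 = 4 → j < 2 * (14 * n - 5))
    (h8 : j % 14 = 8 → j < 4 * (14 * n - 5)) :
    delta27m5 n j ≤ 0 := by
  rw [delta27m5_eq n j hn hj0 (by omega), periodicDelta27m5, deltaDefect27m5]
  suffices ¬(j % 14 = 3 ∨ j % 14 = 9 ∨ j % 14 = 13) → j < 11 * j % 14 * (14 * n - 5) by
    split_ifs <;> omega
  intro hr
  rw [Int.mul_emod]
  have : 0 ≤ j % 14 := by omega
  have : j % 14 < 14 := by omega
  interval_cases j % 14 <;> simp only [Int.reduceMul, Int.reduceMod] <;> omega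

theorem tau27m5_add (n : ℤ) {k : ℤ} (hk : 0 ≤ k) (l : ℕ) :
    tau27m5 n (k + l) = tau27m5 n k + ∑ r ∈ Finset.range l, delta27m5 n (k + r) := by
  rw [tau27m5, tau27m5, show (k + l).toNat = k.toNat + l by omega, Finset.sum_range_add]
  push_cast
  rw [Int.toNat_of_nonneg hk]

theorem tau27m5_succ (n : ℤ) {k : ℤ} (hk : 0 ≤ k) :
    tau27m5 n (k + 1) = tau27m5 n k + delta27m5 n k := by
  simpa using tau27m5_add n hk 1

theorem sum_delta27m5_fourteen_mul_add (n q : ℤ) (hn : 1 ≤ n) (hq : 0 ≤ q) (l : ℕ)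
    (hl : 14 * q + l ≤ 14 * (14 * n - 5)) :
    ∑ r ∈ Finset.range l, delta27m5 n (14 * q + r) =
      ∑ r ∈ Finset.range l, (periodicDelta27m5 r -
        if 14 * q + r < 11 * (r : ℤ) % 14 * (14 * n - 5) then 1 else 0) := by
  refine Finset.sum_congr rfl fun r hr => ?_
  have hrl := Finset.mem_range.1 hr
  rw [delta27m5_eq n _ hn (by omega) (by omega), periodicDelta27m5, periodicDelta27m5,
    deltaDefect27m5, show (14 * q + r) % 14 = (r : ℤ) % 14 by omega,
    show 11 * (14 * q + r) % 14 = 11 * (r : ℤ) % 14 by omega]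

-- Each period `[14q, 14q + 14)` adds `2` minus the number of the thresholds
-- `n - 1, 2n - 1, 3n - 2, 4n - 2` that `q` has not yet reached.
def tauFourteenMul27m5 (n q : ℤ) : ℤ :=
  2 * q - min q (n - 1) - min q (2 * n - 1) - min q (3 * n - 2) - min q (4 * n - 2)

theorem tau27m5_fourteen_mul (n q : ℤ) (hn : 1 ≤ n) (hq0 : 0 ≤ q) (hq : q ≤ 5 * n - 2) :
    tau27m5 n (14 * q) = tauFourteenMul27m5 n q := by
  induction q, hq0 using Int.leInduction with
  | base =>
    simp only [tau27m5, tauFourteenMul27m5, mul_zero, Int.toNat_zero, Finset.range_zero,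
      Finset.sum_empty]
    omega
  | succ q hq0 ih =>
    rw [show 14 * (q + 1) = 14 * q + (14 : ℕ) by push_cast; ring, tau27m5_add n (by omega),
      ih (by omega), sum_delta27m5_fourteen_mul_add n q hn hq0 14 (by omega)]
    simp only [Finset.sum_range_succ, Finset.sum_range_zero]
    simp (disch := omega) [periodicDelta27m5, if_pos, if_neg]
    unfold tauFourteenMul27m5
    split_ifs <;> omega

theorem tau27m5_fourteen_mul_add (n q : ℤ) (hn : 1 ≤ n) (hq0 : 0 ≤ q) (hq : q ≤ 5 * n - 3)
    (l : ℕ) (hl : l ≤ 14) :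
    tau27m5 n (14 * q + l) = tauFourteenMul27m5 n q + ∑ r ∈ Finset.range l,
      (periodicDelta27m5 r - if 14 * q + r < 11 * (r : ℤ) % 14 * (14 * n - 5) then 1 else 0) := by
  rw [tau27m5_add n (by omega), tau27m5_fourteen_mul n q hn hq0 (by omega),
    sum_delta27m5_fourteen_mul_add n q hn hq0 l (by omega)]

theorem tau27m5_fourteen_mul_add_one (n q : ℤ) (hn : 1 ≤ n) (hq0 : 0 ≤ q) (hq : q ≤ 5 * n - 3) :
    tau27m5 n (14 * q + 1) = tauFourteenMul27m5 n q + 1 := by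
  have := tau27m5_fourteen_mul_add n q hn hq0 hq 1 (by norm_num)
  simp only [Finset.sum_range_succ, Finset.sum_range_zero] at this
  simpa (disch := omega) [periodicDelta27m5, if_pos, if_neg] using this

theorem tau27m5_fourteen_mul_add_four (n q : ℤ) (hn : 1 ≤ n) (hq0 : 0 ≤ q) (hq : q ≤ 5 * n - 3) :
    tau27m5 n (14 * q + 4) = tauFourteenMul27m5 n q := by
  have := tau27m5_fourteen_mul_add n q hn hq0 hq 4 (by norm_num)
  simp only [Finset.sum_range_succ, Finset.sum_range_zero] at this
  simpa (disch := omega) [periodicDelta27m5, if_pos, if_neg] using this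

theorem tau27m5_fourteen_mul_add_five (n q : ℤ) (hn : 1 ≤ n) (hq0 : 2 * n - 1 ≤ q)
    (hq : q ≤ 5 * n - 3) :
    tau27m5 n (14 * q + 5) = tauFourteenMul27m5 n q + 1 := by
  have := tau27m5_fourteen_mul_add n q hn (by omega) hq 5 (by norm_num)
  simp only [Finset.sum_range_succ, Finset.sum_range_zero] at this
  simpa (disch := omega) [periodicDelta27m5, if_pos, if_neg] using this

theorem tau27m5_M27m5 (n i : ℤ) (hn : 1 ≤ n) (hi0 : 0 ≤ i) (hi : i ≤ 6 * n - 4) :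
    tau27m5 n (M27m5 n i) = tauFourteenMul27m5 n (M27m5 n i / 14) + 1 := by
  rw [M27m5]
  split_ifs
  · rw [tau27m5_fourteen_mul_add_one n i hn hi0 (by omega)]
    congr 2
    omega
  · rw [show 14 * (n + i / 2) - 9 = 14 * (n + i / 2 - 1) + 5 by ring,
      tau27m5_fourteen_mul_add_five n _ hn (by omega) (by omega)]
    congr 2
    omega
  · rw [tau27m5_fourteen_mul_add_one n _ hn (by omega) (by omega)]
    congr 2
    omega
  · rw [show 14 * (i - n) + 15 = 14 * (i - n + 1) + 1 by ring,
      tau27m5_fourteen_mul_add_one n _ hn (by omega) (by omega)]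
    congr 2
    omega

theorem tau27m5_m27m5 (n i : ℤ) (hn : 1 ≤ n) (hi0 : 0 ≤ i) (hi : i ≤ 6 * n - 3) :
    tau27m5 n (m27m5 n i) = tauFourteenMul27m5 n (m27m5 n i / 14) := by
  rw [m27m5]
  split_ifs
  · rw [tau27m5_fourteen_mul n i hn hi0 (by omega)]
    congr 1
    omega
  · rw [show 14 * (n + i / 2) - 10 = 14 * (n + i / 2 - 1) + 4 by ring,
      tau27m5_fourteen_mul_add_four n _ hn (by omega) (by omega)]
    congr 1
    omega
  · rw [tau27m5_fourteen_mul n _ hn (by omega) (by omega)]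
    congr 1
    omega
  · rw [tau27m5_fourteen_mul_add_four n _ hn (by omega) (by omega)]
    congr 1
    omega

theorem tau27m5_le_succ_of_m27m5_le_of_lt_M27m5 {n i j : ℤ} (hn : 1 ≤ n) (hi0 : 0 ≤ i)
    (hi : i ≤ 6 * n - 4) (hmj : m27m5 n i ≤ j) (hjM : j < M27m5 n i) :
    tau27m5 n j ≤ tau27m5 n (j + 1) := by
  unfold m27m5 at hmj
  unfold M27m5 at hjM
  have : 0 ≤ delta27m5 n j := by
    split_ifs at hmj hjM <;>
      exact delta27m5_nonneg n j hn (by omega) (by omega) (by omega) (by omega)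
  rw [tau27m5_succ n (by split_ifs at hmj <;> omega)]
  omega

theorem tau27m5_succ_le_of_M27m5_le_of_lt_m27m5 {n i j : ℤ} (hn : 1 ≤ n) (hi0 : 0 ≤ i)
    (hi : i ≤ 6 * n - 4) (hMj : M27m5 n i ≤ j) (hjm : j < m27m5 n (i + 1)) :
    tau27m5 n (j + 1) ≤ tau27m5 n j := by
  unfold M27m5 at hMj
  unfold m27m5 at hjm
  have : delta27m5 n j ≤ 0 := by
    split_ifs at hMj hjm <;>
      exact delta27m5_nonpos n j hn (by omega) (by omega) (by omega) (by omega) (by omega)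
  rw [tau27m5_succ n (by split_ifs at hMj <;> omega)]
  omega

theorem tau27m5_le_succ_of_m27m5_le {n j : ℤ} (hn : 1 ≤ n) (hj : m27m5 n (6 * n - 3) ≤ j) :
    tau27m5 n j ≤ tau27m5 n (j + 1) := by
  rw [m27m5, if_neg (by omega), if_neg (by omega)] at hj
  rw [tau27m5_succ n (by omega)]
  have := delta27m5_nonneg n j hn (by omega) (by omega) (by omega) (by omega)
  omega

/-- Structure of the tau function of `Σ(2,7,14n-5)` (`n ≥ 1`): monotonicity between the
local extrema `M_i`, `m_i`, and the values of `τ` at those extrema. -/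
theorem tau_structure_27m5 (n : ℤ) (hn : 1 ≤ n) :
    (∀ i : ℤ, 0 ≤ i → i ≤ 6 * n - 4 → ∀ j : ℤ, m27m5 n i ≤ j → j < M27m5 n i →
      tau27m5 n j ≤ tau27m5 n (j + 1)) ∧
    (∀ i : ℤ, 0 ≤ i → i ≤ 6 * n - 4 → ∀ j : ℤ, M27m5 n i ≤ j → j < m27m5 n (i + 1) →
      tau27m5 n (j + 1) ≤ tau27m5 n j) ∧
    (∀ j : ℤ, m27m5 n (6 * n - 3) ≤ j → tau27m5 n j ≤ tau27m5 n (j + 1)) ∧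
    (∀ i : ℤ, 0 ≤ i → i ≤ n - 1 → tau27m5 n (M27m5 n i) = 1 - 2 * i) ∧
    (∀ i : ℤ, n ≤ i → i ≤ 2 * n - 1 → tau27m5 n (M27m5 n i) = 2 - n - i) ∧
    (∀ i : ℤ, 2 * n ≤ i → i ≤ 4 * n - 4 → tau27m5 n (M27m5 n i) = 3 - 3 * n) ∧
    (∀ i : ℤ, 4 * n - 3 ≤ i → i ≤ 5 * n - 3 → tau27m5 n (M27m5 n i) = 6 - 7 * n + i) ∧
    (∀ i : ℤ, 5 * n - 2 ≤ i → i ≤ 6 * n - 4 → tau27m5 n (M27m5 n i) = 9 - 12 * n + 2 * i) ∧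
    (∀ i : ℤ, 0 ≤ i → i ≤ n - 1 → tau27m5 n (m27m5 n i) = -2 * i) ∧
    (∀ i : ℤ, n ≤ i → i ≤ 2 * n - 1 → tau27m5 n (m27m5 n i) = 1 - n - i) ∧
    (∀ i : ℤ, 2 * n ≤ i → i ≤ 4 * n - 3 → tau27m5 n (m27m5 n i) = 2 - 3 * n) ∧
    (∀ i : ℤ, 4 * n - 2 ≤ i → i ≤ 5 * n - 2 → tau27m5 n (m27m5 n i) = 4 - 7 * n + i) ∧
    (∀ i : ℤ, 5 * n - 1 ≤ i → i ≤ 6 * n - 3 → tau27m5 n (m27m5 n i) = 6 - 12 * n + 2 * i) := by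
  refine ⟨fun i hi0 hi j => tau27m5_le_succ_of_m27m5_le_of_lt_M27m5 hn hi0 hi,
    fun i hi0 hi j => tau27m5_succ_le_of_M27m5_le_of_lt_m27m5 hn hi0 hi,
    fun j => tau27m5_le_succ_of_m27m5_le hn, ?_, ?_, ?_, ?_, ?_, ?_, ?_, ?_, ?_, ?_⟩ <;>
    intro i hlo hhi
  all_goals first
    | rw [tau27m5_M27m5 n i hn (by omega) (by omega), M27m5]
    | rw [tau27m5_m27m5 n i hn (by omega) (by omega), m27m5]
  all_goals
    unfold tauFourteenMul27m5
    split_ifs <;> omega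
end

section
/- For every integer n ≥ 1, setting e := -1/(14(14n+3)) and ε := 70n+1, one has the identity of rational numbers ε²·e + e + 5 - 12·(s(1,2) + s(1,7) + s(5n+1, 14n+3)) = -24n. (This computes the d-invariant correction term for -Σ(2,7,14n+3): one quarter of the left-hand side equals -6n.) -/
/-- The sawtooth function `⟨x⟩`: zero on integers, `x - ⌊x⌋ - 1/2` otherwise. -/
noncomputable def sawtooth (x : ℚ) : ℚ :=
  if (⌊x⌋ : ℚ) = x then 0 else x - ⌊x⌋ - 1 / 2

/-- The classical Dedekind sum `s(h,k) = Σ_{i=1}^{k-1} ⟨i/k⟩⟨hi/k⟩`. -/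
noncomputable def dedekindSum (h k : ℤ) : ℚ :=
  ∑ i ∈ Finset.Icc 1 (k - 1).toNat,
    sawtooth ((i : ℚ) / (k : ℚ)) * sawtooth ((h : ℚ) * (i : ℚ) / (k : ℚ))

lemma saw_eq (x : ℚ) (q : ℤ) (h1 : (q : ℚ) < x) (h2 : x < q + 1) :
    sawtooth x = x - q - 1 / 2 := by
  have hf : ⌊x⌋ = q := Int.floor_eq_iff.mpr ⟨h1.le, h2⟩
  unfold sawtooth
  rw [hf, if_neg h1.ne]

lemma term_eq (h k i q : ℕ) (hk : 0 < k) (h0 : 0 < i) (hik : i < k)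
    (h1 : q * k < h * i) (h2 : h * i < (q + 1) * k) :
    sawtooth ((i : ℚ) / (k : ℚ)) * sawtooth ((h : ℚ) * (i : ℚ) / (k : ℚ))
      = ((i : ℚ) / k - 1 / 2) * ((h : ℚ) * i / k - q - 1 / 2) := by
  have hk' : (0 : ℚ) < k := by exact_mod_cast hk
  have e1 : sawtooth ((i : ℚ) / k) = (i : ℚ) / k - ((0 : ℤ) : ℚ) - 1 / 2 := by
    apply saw_eq
    · push_cast
      exact div_pos (by exact_mod_cast h0) hk'
    · push_cast
      rw [zero_add, div_lt_one hk']
      exact_mod_cast hik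
  have e2 : sawtooth ((h : ℚ) * i / k) = (h : ℚ) * i / k - ((q : ℤ) : ℚ) - 1 / 2 := by
    apply saw_eq
    · rw [lt_div_iff₀ hk']
      exact_mod_cast h1
    · rw [div_lt_iff₀ hk']
      exact_mod_cast h2
  rw [e1, e2]
  push_cast
  ring

lemma sum_range_mul14 (N : ℕ) (g : ℕ → ℚ) :
    ∑ j ∈ Finset.range (14 * N), g j
      = ∑ m ∈ Finset.range N, ∑ t ∈ Finset.range 14, g (14 * m + t) := by
  induction N with
  | zero => simp
  | succ n ih =>
    rw [Finset.sum_range_succ (fun m => ∑ t ∈ Finset.range 14, g (14 * m + t)) n,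
      show 14 * (n + 1) = 14 * n + 14 by ring, Finset.sum_range_add, ih]

lemma sum_range_id' (N : ℕ) : ∑ m ∈ Finset.range N, (m : ℚ) = ((N : ℚ) ^ 2 - N) / 2 := by
  induction N with
  | zero => simp
  | succ n ih =>
    rw [Finset.sum_range_succ, ih]
    push_cast
    ring

lemma sum_range_sq' (N : ℕ) :
    ∑ m ∈ Finset.range N, (m : ℚ) ^ 2 = (2 * (N : ℚ) ^ 3 - 3 * (N : ℚ) ^ 2 + N) / 6 := by
  induction N with
  | zero => simp
  | succ n ih =>
    rw [Finset.sum_range_succ, ih]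
    push_cast
    ring

set_option maxHeartbeats 2000000 in
lemma dedInnerSum (N m : ℕ) (hm : m < N) :
    ∑ t ∈ Finset.range 14,
        sawtooth ((↑(1 + (14 * m + t)) : ℚ) / ((14 * N + 3 : ℕ) : ℚ)) *
          sawtooth (((5 * N + 1 : ℕ) : ℚ) * (↑(1 + (14 * m + t)) : ℚ) / ((14 * N + 3 : ℕ) : ℚ))
      = (-196 / (14 * (N : ℚ) + 3) ^ 2) * (m : ℚ) ^ 2
            + ((196 * (N : ℚ) - 168) / (14 * (N : ℚ) + 3) ^ 2) * m
            + (-49 * (N : ℚ) ^ 2 + (343 / 2) * N - 67 / 2) / (14 * (N : ℚ) + 3) ^ 2 := by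
  have hk : 0 < 14 * N + 3 := by omega
  simp only [Finset.sum_range_succ, Finset.sum_range_zero, zero_add]
  rw [term_eq (5*N+1) (14*N+3) (1+(14*m+0)) (5*m+0) hk (by omega) (by omega) (by nlinarith) (by nlinarith),
      term_eq (5*N+1) (14*N+3) (1+(14*m+1)) (5*m+0) hk (by omega) (by omega) (by nlinarith) (by nlinarith),
      term_eq (5*N+1) (14*N+3) (1+(14*m+2)) (5*m+1) hk (by omega) (by omega) (by nlinarith) (by nlinarith),
      term_eq (5*N+1) (14*N+3) (1+(14*m+3)) (5*m+1) hk (by omega) (by omega) (by nlinarith) (by nlinarith),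
      term_eq (5*N+1) (14*N+3) (1+(14*m+4)) (5*m+1) hk (by omega) (by omega) (by nlinarith) (by nlinarith),
      term_eq (5*N+1) (14*N+3) (1+(14*m+5)) (5*m+2) hk (by omega) (by omega) (by nlinarith) (by nlinarith),
      term_eq (5*N+1) (14*N+3) (1+(14*m+6)) (5*m+2) hk (by omega) (by omega) (by nlinarith) (by nlinarith),
      term_eq (5*N+1) (14*N+3) (1+(14*m+7)) (5*m+2) hk (by omega) (by omega) (by nlinarith) (by nlinarith),
      term_eq (5*N+1) (14*N+3) (1+(14*m+8)) (5*m+3) hk (by omega) (by omega) (by nlinarith) (by nlinarith),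
      term_eq (5*N+1) (14*N+3) (1+(14*m+9)) (5*m+3) hk (by omega) (by omega) (by nlinarith) (by nlinarith),
      term_eq (5*N+1) (14*N+3) (1+(14*m+10)) (5*m+3) hk (by omega) (by omega) (by nlinarith) (by nlinarith),
      term_eq (5*N+1) (14*N+3) (1+(14*m+11)) (5*m+4) hk (by omega) (by omega) (by nlinarith) (by nlinarith),
      term_eq (5*N+1) (14*N+3) (1+(14*m+12)) (5*m+4) hk (by omega) (by omega) (by nlinarith) (by nlinarith),
      term_eq (5*N+1) (14*N+3) (1+(14*m+13)) (5*m+4) hk (by omega) (by omega) (by nlinarith) (by nlinarith)]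
  have hk' : (14 * (N : ℚ) + 3) ≠ 0 := by positivity
  push_cast
  field_simp
  ring

set_option maxHeartbeats 1000000 in
lemma ded_main (N : ℕ) (hN : 1 ≤ N) :
    dedekindSum (5 * (N : ℤ) + 1) (14 * (N : ℤ) + 3)
      = -(N : ℚ) / 12 + 25 / 56 - 197 / (168 * (14 * (N : ℚ) + 3)) := by
  have hk0 : 0 < 14 * N + 3 := by omega
  rw [dedekindSum]
  have ht : ((14 * (N : ℤ) + 3) - 1).toNat = 14 * N + 2 := by omega
  have hkc : ((14 * (N : ℤ) + 3 : ℤ) : ℚ) = ((14 * N + 3 : ℕ) : ℚ) := by push_cast; ring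
  have hhc : ((5 * (N : ℤ) + 1 : ℤ) : ℚ) = ((5 * N + 1 : ℕ) : ℚ) := by push_cast; ring
  rw [ht]
  simp only [hkc, hhc]
  rw [← Finset.Ico_add_one_right_eq_Icc, Finset.sum_Ico_eq_sum_range]
  rw [show (14 * N + 2 + 1 - 1) = (14 * N + 1) + 1 by omega]
  rw [Finset.sum_range_succ, Finset.sum_range_succ, sum_range_mul14]
  have hc : ∑ m ∈ Finset.range N,
      (∑ t ∈ Finset.range 14,
        sawtooth ((↑(1 + (14 * m + t)) : ℚ) / ((14 * N + 3 : ℕ) : ℚ)) *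
          sawtooth (((5 * N + 1 : ℕ) : ℚ) * (↑(1 + (14 * m + t)) : ℚ) / ((14 * N + 3 : ℕ) : ℚ)))
      = ∑ m ∈ Finset.range N,
        ((-196 / (14 * (N : ℚ) + 3) ^ 2) * (m : ℚ) ^ 2
            + ((196 * (N : ℚ) - 168) / (14 * (N : ℚ) + 3) ^ 2) * m
            + (-49 * (N : ℚ) ^ 2 + (343 / 2) * N - 67 / 2) / (14 * (N : ℚ) + 3) ^ 2) :=
    Finset.sum_congr rfl (fun m hm => dedInnerSum N m (Finset.mem_range.mp hm))
  rw [hc]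
  rw [term_eq (5*N+1) (14*N+3) (1+14*N) (5*N) hk0 (by omega) (by omega) (by nlinarith) (by nlinarith),
      term_eq (5*N+1) (14*N+3) (1+(14*N+1)) (5*N) hk0 (by omega) (by omega) (by nlinarith) (by nlinarith)]
  have hk' : (14 * (N : ℚ) + 3) ≠ 0 := by positivity
  rw [Finset.sum_add_distrib, Finset.sum_add_distrib, ← Finset.mul_sum, ← Finset.mul_sum,
    Finset.sum_const, Finset.card_range, nsmul_eq_mul, sum_range_id', sum_range_sq']
  push_cast
  field_simp
  ring

lemma ded_one_two : dedekindSum 1 2 = 0 := by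
  rw [dedekindSum]
  rw [show ((2 : ℤ) - 1).toNat = 1 by omega]
  rw [Finset.Icc_self, Finset.sum_singleton]
  have : sawtooth ((1 : ℚ) / 2) = 0 := by
    rw [saw_eq ((1 : ℚ) / 2) 0 (by norm_num) (by norm_num)]
    norm_num
  norm_num [this]

lemma ded_one_seven : dedekindSum 1 7 = 5 / 14 := by
  rw [dedekindSum]
  rw [show ((7 : ℤ) - 1).toNat = 6 by omega]
  rw [← Finset.Ico_add_one_right_eq_Icc, Finset.sum_Ico_eq_sum_range]
  norm_num [Finset.sum_range_succ]
  rw [saw_eq ((1 : ℚ) / 7) 0 (by norm_num) (by norm_num),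
      saw_eq ((2 : ℚ) / 7) 0 (by norm_num) (by norm_num),
      saw_eq ((3 : ℚ) / 7) 0 (by norm_num) (by norm_num),
      saw_eq ((4 : ℚ) / 7) 0 (by norm_num) (by norm_num),
      saw_eq ((5 : ℚ) / 7) 0 (by norm_num) (by norm_num),
      saw_eq ((6 : ℚ) / 7) 0 (by norm_num) (by norm_num)]
  norm_num

/-- For every integer `n ≥ 1`, with `e = -1/(14(14n+3))` and `ε = 70n+1`, one has
`ε²·e + e + 5 - 12·(s(1,2) + s(1,7) + s(5n+1, 14n+3)) = -24n`.  (This computes the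
`d`-invariant correction term for `-Σ(2,7,14n+3)`: one quarter of it equals `-6n`.) -/
theorem dedekind_identity_27p3 (n : ℤ) (hn : 1 ≤ n) :
    ((70 * n + 1 : ℚ) ^ 2) * (-1 / (14 * (14 * (n : ℚ) + 3)))
        + (-1 / (14 * (14 * (n : ℚ) + 3))) + 5
        - 12 * (dedekindSum 1 2 + dedekindSum 1 7 + dedekindSum (5 * n + 1) (14 * n + 3))
      = -24 * n := by
  obtain ⟨N, rfl⟩ : ∃ N : ℕ, n = N := ⟨n.toNat, (Int.toNat_of_nonneg (by omega)).symm⟩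
  have hN : 1 ≤ N := by exact_mod_cast hn
  rw [ded_one_two, ded_one_seven, ded_main N hN]
  have hk' : (14 * (N : ℚ) + 3) ≠ 0 := by positivity
  push_cast
  field_simp
  ring
end
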